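/- There is a universal constant C such that for every finite set E ⊂ ℝ², every x ∈ ℝ², and every integer k ≥ 0, there exist subsets S₁, …, S₁₂ ⊂ E with #S_ν ≤ k for each ν, such that ∩_{ν=1}^{12} σ(x, S_ν) ⊂ C·σ^♯(x, k). -/

import Mathlib

open Set Real Pointwise

noncomputable section

abbrev E2 := EuclideanSpace ℝ (Fin 2)

/-- Partial derivative in coordinate direction `i`. -/
noncomputable def pd (i : Fin 2) (F : E2 → ℝ) : E2 → ℝ :=
  fun x => fderiv ℝ F x (EuclideanSpace.single i 1)

/-- Iterated partial derivative `∂^α` for a multi-index `α = (α₁, α₂)`. -/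
noncomputable def Dmul (α : ℕ × ℕ) (F : E2 → ℝ) : E2 → ℝ :=
  (pd 0)^[α.1] ((pd 1)^[α.2] F)

/-- The multi-indices `α` with `|α| ≤ 2`. -/
def multiIdx2 : Finset (ℕ × ℕ) :=
  (Finset.range 3 ×ˢ Finset.range 3).filter (fun α => α.1 + α.2 ≤ 2)

/-- `(Σ_{|α| ≤ 2} |∂^α F (x)|²)^{1/2}`. -/
noncomputable def C2sum (F : E2 → ℝ) (x : E2) : ℝ :=
  Real.sqrt (∑ α ∈ multiIdx2, (Dmul α F x) ^ 2)

/-- `‖F‖_{C²(ℝ²)} ≤ M`. -/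
def C2NormLE (F : E2 → ℝ) (M : ℝ) : Prop := ∀ x, C2sum F x ≤ M

/-- `f ∈ C²₊(E)`: `f` is the restriction to `E` of a nonnegative `C²` function of finite norm. -/
def MemC2plusTrace (E : Set E2) (f : E2 → ℝ) : Prop :=
  ∃ F : E2 → ℝ, ContDiff ℝ 2 F ∧ (∀ x, 0 ≤ F x) ∧ (∀ x ∈ E, F x = f x) ∧ ∃ M, C2NormLE F M

/-- The trace norm `‖f‖_{C²₊(E)}`. -/
noncomputable def traceNormPlus (E : Set E2) (f : E2 → ℝ) : ℝ :=
  sInf { M | ∃ F : E2 → ℝ, ContDiff ℝ 2 F ∧ (∀ x, 0 ≤ F x) ∧ (∀ x ∈ E, F x = f x) ∧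
    C2NormLE F M }

/-- The one-jet `𝒥_x F`, as an affine function on `ℝ²`. -/
noncomputable def jet (F : E2 → ℝ) (x : E2) : E2 → ℝ :=
  fun y => F x + fderiv ℝ F x (y - x)

/-- The (half-open) square with center `c` and sidelength `δ`. -/
def sqC (c : E2) (δ : ℝ) : Set E2 :=
  {x | ∀ i : Fin 2, c i - δ / 2 ≤ x i ∧ x i < c i + δ / 2}

/-- `σ(x, S)`. -/
def sigmaSet (x : E2) (S : Set E2) : Set (E2 → ℝ) :=
  { P | ∃ φ : E2 → ℝ, ContDiff ℝ 2 φ ∧ (∀ z ∈ S, φ z = 0) ∧ C2NormLE φ 1 ∧ P = jet φ x }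

/-- `σ^♯(x, k)`. -/
def sigmaSharp (E : Set E2) (x : E2) (k : ℕ) : Set (E2 → ℝ) :=
  { P | ∀ S : Set E2, S ⊆ E → S.ncard ≤ k → P ∈ sigmaSet x S }

/-- `Γ₊(x, S, M)` (for the data `f`). -/
def GammaPlus (f : E2 → ℝ) (x : E2) (S : Set E2) (M : ℝ) : Set (E2 → ℝ) :=
  { P | ∃ F : E2 → ℝ, ContDiff ℝ 2 F ∧ (∀ y, 0 ≤ F y) ∧ (∀ z ∈ S, F z = f z) ∧
      C2NormLE F M ∧ P = jet F x }

/-- `Γ₊^♯(x, k, M)` (for `f` given on `E`). -/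
def GammaSharp (E : Set E2) (f : E2 → ℝ) (x : E2) (k : ℕ) (M : ℝ) : Set (E2 → ℝ) :=
  { P | ∀ S : Set E2, S ⊆ E → S.ncard ≤ k → P ∈ GammaPlus f x S M }

/-- `ℬ(x, δ) = {P : |∂^α P(x)| ≤ δ^{2-|α|} for |α| ≤ 1}`. -/
def jetBall (x : E2) (δ : ℝ) : Set (E2 → ℝ) :=
  { P | |P x| ≤ δ ^ 2 ∧ ∀ i : Fin 2, |fderiv ℝ P x (EuclideanSpace.single i 1)| ≤ δ }

/-- `|P|_{ℛ_x}`. -/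
noncomputable def jetNormAt (x : E2) (P : E2 → ℝ) : ℝ :=
  Real.sqrt ((P x) ^ 2 + ‖fderiv ℝ P x‖ ^ 2)

/-- diameter of a set of jets with respect to `|·|_{ℛ_x}`. -/
noncomputable def jetDiam (x : E2) (A : Set (E2 → ℝ)) : ℝ :=
  sSup { r | ∃ P ∈ A, ∃ P' ∈ A, r = jetNormAt x (P - P') }

noncomputable def vec2 (a b : ℝ) : E2 := (WithLp.equiv 2 (Fin 2 → ℝ)).symm ![a, b]

/-- A dyadic square is encoded by a triple `q = (i, j, k)`,
corresponding to `[2^k i, 2^k (i+1)) × [2^k j, 2^k (j+1))`; its sidelength is `2^k`. -/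
noncomputable def dyadicLen (q : ℤ × ℤ × ℤ) : ℝ := (2 : ℝ) ^ q.2.2

noncomputable def dyadicCenter (q : ℤ × ℤ × ℤ) : E2 :=
  vec2 ((2 : ℝ) ^ q.2.2 * ((q.1 : ℝ) + 1 / 2)) ((2 : ℝ) ^ q.2.2 * ((q.2.1 : ℝ) + 1 / 2))

noncomputable def dyadicSq (q : ℤ × ℤ × ℤ) : Set E2 := sqC (dyadicCenter q) (dyadicLen q)

/-- The concentric dilate `λQ` of the dyadic square `q`. -/
noncomputable def dilate (q : ℤ × ℤ × ℤ) (lam : ℝ) : Set E2 :=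
  sqC (dyadicCenter q) (lam * dyadicLen q)

/-- The dyadic parent `Q⁺`. -/
def dyadicParent (q : ℤ × ℤ × ℤ) : ℤ × ℤ × ℤ := (Int.fdiv q.1 2, Int.fdiv q.2.1 2, q.2.2 + 1)

/-- Membership in the Calderón–Zygmund collection `Λ₀`. -/
def memLambda0 (E : Set E2) (k₀ : ℕ) (C₀ : ℝ) (q : ℤ × ℤ × ℤ) : Prop :=
  dyadicLen q ≤ 1 ∧
  (∀ x ∈ dilate q 2, C₀ * dyadicLen q ≤ jetDiam x (sigmaSharp E x k₀)) ∧
  (∃ y ∈ dilate (dyadicParent q) 2, jetDiam y (sigmaSharp E y k₀) < 2 * C₀ * dyadicLen q)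

def Lambda0 (E : Set E2) (k₀ : ℕ) (C₀ : ℝ) : Set (ℤ × ℤ × ℤ) := { q | memLambda0 E k₀ C₀ q }

def LambdaSharp (E : Set E2) (k₀ : ℕ) (C₀ : ℝ) : Set (ℤ × ℤ × ℤ) :=
  { q | q ∈ Lambda0 E k₀ C₀ ∧ (E ∩ dilate q 2).Nonempty }


/-!
Each `σ(x, S)` is the image, under the injective linear map `(a, L) ↦ (y ↦ a + L (y - x))`, of
an absolutely convex set of coordinates `(φ x, Dφ x)` in the `3`-dimensional space
`ℝ × (ℝ² →L ℝ)`. So it suffices to show that a finite family of absolutely convex sets `Tᵢ` in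
`ℝᵈ` has `d` members whose intersection lies in `2ᵈ⁺¹ • ⋂ᵢ Tᵢ`.

If some `Tᵢ` spans a proper subspace, restrict the family to that subspace and induct on `d`.
Otherwise every `Tᵢ` is a neighbourhood of `0`; passing to closures costs a factor `2`. For closed
`Tᵢ` work with polars: choose `p` in some `Tᵢ°` as far as possible from the span `W` of the
functionals chosen so far. Since `(⋂ᵢ Tᵢ)°` lies in the closed absolutely convex hull of the
`Tᵢ°` (bipolar theorem), `p` is also at least as far from `W` as any point of `(⋂ᵢ Tᵢ)°`. By
induction, every `f ∈ (⋂ᵢ Tᵢ)° ∩ W` is bounded by `2ʲ - 1` on the intersection of the `j` chosen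
sets. After at most `d` steps `W` contains `(⋂ᵢ Tᵢ)°`, and bipolarity gives the inclusion.
-/

open RealInnerProductSpace Module Topology Metric

section Polar

variable {E : Type*} [NormedAddCommGroup E] [InnerProductSpace ℝ E]

lemma mem_innerPolar_iff {s : Set E} {f : E} :
    f ∈ (innerₗ E).polar s ↔ ∀ a ∈ s, |⟪a, f⟫| ≤ 1 := by
  simp [LinearMap.polar_mem_iff]

lemma isClosed_innerPolar (s : Set E) : IsClosed ((innerₗ E).polar s) := by
  simp_rw [LinearMap.polar_eq_iInter, innerₗ_apply_apply, Real.norm_eq_abs]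
  exact isClosed_biInter fun a _ => isClosed_le (continuous_const.inner continuous_id).abs
    continuous_const

lemma innerPolar_innerPolar_subset [CompleteSpace E] {A : Set E} (hA : AbsConvex ℝ A)
    (hcl : IsClosed A) (h0 : (0 : E) ∈ A) : (innerₗ E).polar ((innerₗ E).polar A) ⊆ A := by
  intro z hz
  by_contra hzA
  obtain ⟨f, u, hfA, hfz⟩ := geometric_hahn_banach_closed_point hA.2 hcl hzA
  have hu : 0 < u := by simpa using hfA 0 h0
  set w := u⁻¹ • (InnerProductSpace.toDual ℝ E).symm f
  have hw (a : E) : ⟪w, a⟫ = f a / u := by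
    rw [real_inner_smul_left, InnerProductSpace.toDual_symm_apply, inv_mul_eq_div]
  have hwA : w ∈ (innerₗ E).polar A := mem_innerPolar_iff.2 fun a ha => by
    have hneg := hfA (-a) (hA.1.neg_mem_iff.2 ha)
    rw [map_neg] at hneg
    rw [real_inner_comm, hw, abs_le, le_div_iff₀ hu, div_le_one hu]
    constructor <;> linarith [hfA a ha]
  have hzw := mem_innerPolar_iff.1 hz w hwA
  rw [hw, abs_le, div_le_one hu] at hzw
  linarith [hzw.2]

lemma innerPolar_iInter_subset_closedAbsConvexHull [CompleteSpace E] {ι : Type*} [Nonempty ι]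
    {T : ι → Set E} (hT : ∀ i, AbsConvex ℝ (T i)) (hcl : ∀ i, IsClosed (T i))
    (h0 : ∀ i, (0 : E) ∈ T i) :
    (innerₗ E).polar (⋂ i, T i) ⊆ closedAbsConvexHull ℝ (⋃ i, (innerₗ E).polar (T i)) := by
  set A := closedAbsConvexHull ℝ (⋃ i, (innerₗ E).polar (T i))
  have hA0 : (0 : E) ∈ A := subset_closedAbsConvexHull <|
    mem_iUnion.2 ⟨Classical.arbitrary ι, LinearMap.zero_mem_polar _ _⟩
  have hpolarA : (innerₗ E).polar A ⊆ ⋂ i, T i := subset_iInter fun i =>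
    ((innerₗ E).polar_antitone ((subset_iUnion _ i).trans subset_closedAbsConvexHull)).trans
      (innerPolar_innerPolar_subset (hT i) (hcl i) (h0 i))
  exact ((innerₗ E).polar_antitone hpolarA).trans
    (innerPolar_innerPolar_subset absConvex_convexClosedHull isClosed_closedAbsConvexHull hA0)

lemma isBounded_innerPolar_of_mem_nhds_zero {s : Set E} (hs : s ∈ 𝓝 0) :
    Bornology.IsBounded ((innerₗ E).polar s) := by
  obtain ⟨r, hr, hrs⟩ := nhds_basis_closedBall.mem_iff.1 hs
  refine (isBounded_closedBall (x := (0 : E)) (r := r⁻¹)).subset fun f hf => ?_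
  rw [mem_closedBall_zero_iff]
  rcases eq_or_ne f 0 with rfl | hf0
  · simp [hr.le]
  have hnf : 0 < ‖f‖ := norm_pos_iff.2 hf0
  have ha : (r / ‖f‖) • f ∈ s := hrs <| by
    rw [mem_closedBall_zero_iff, norm_smul, norm_div, norm_norm, Real.norm_of_nonneg hr.le,
      div_mul_cancel₀ _ hnf.ne']
  have hfa := mem_innerPolar_iff.1 hf _ ha
  rw [real_inner_smul_left, real_inner_self_eq_norm_sq, abs_of_nonneg (by positivity),
    div_mul_eq_mul_div, pow_two, mul_div_assoc, mul_self_div_self] at hfa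
  rw [← one_div, le_div_iff₀ hr]
  linarith

lemma starProjection_orthogonal_eq_zero_iff (W : Submodule ℝ E) [W.HasOrthogonalProjection]
    {f : E} : Wᗮ.starProjection f = 0 ↔ f ∈ W := by
  rw [Submodule.starProjection_apply_eq_zero_iff, Submodule.orthogonal_orthogonal]

end Polar

lemma AbsConvex.linear_preimage {E F : Type*} [AddCommGroup E] [Module ℝ E] [AddCommGroup F]
    [Module ℝ F] {s : Set F} (hs : AbsConvex ℝ s) (f : E →ₗ[ℝ] F) : AbsConvex ℝ (f ⁻¹' s) :=
  ⟨hs.1.mulActionHom_preimage f.toMulActionHom, hs.2.linear_preimage f⟩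

section NormedSpace

variable {E : Type*} [NormedAddCommGroup E] [NormedSpace ℝ E]

lemma AbsConvex.mem_nhds_zero_of_span_eq_top [FiniteDimensional ℝ E] {s : Set E}
    (hs : AbsConvex ℝ s) (h0 : (0 : E) ∈ s) (hspan : Submodule.span ℝ s = ⊤) : s ∈ 𝓝 0 := by
  obtain ⟨z, hz⟩ : (interior s).Nonempty := by
    rw [hs.2.interior_nonempty_iff_affineSpan_eq_top,
      AffineSubspace.affineSpan_eq_top_iff_vectorSpan_eq_top_of_nonempty ℝ E E ⟨0, h0⟩,
      vectorSpan_eq_span_vsub_set_right ℝ h0]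
    simpa using hspan
  have hz' : -z ∈ interior s := by
    rw [← hs.1.neg_eq] at hz
    exact ((Homeomorph.neg E).preimage_interior s).superset hz
  have hmid := hs.2.interior hz hz' (by norm_num : (0 : ℝ) ≤ 1 / 2) (by norm_num : (0 : ℝ) ≤ 1 / 2)
    (by norm_num)
  rw [smul_neg, add_neg_cancel] at hmid
  exact mem_interior_iff_mem_nhds.1 hmid

lemma Convex.closure_subset_smul_of_mem_nhds_zero {s : Set E} (hs : Convex ℝ s) (h0 : s ∈ 𝓝 0)
    {t : ℝ} (ht : 1 < t) : closure s ⊆ t • s := by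
  refine (hs.closure_subset_image_homothety_interior_of_one_lt (mem_interior_iff_mem_nhds.2 h0)
    t ht).trans ?_
  rintro _ ⟨y, hy, rfl⟩
  exact ⟨y, interior_subset hy, by simp [AffineMap.homothety_apply]⟩

end NormedSpace

section Selection

variable {E : Type*} [NormedAddCommGroup E] [InnerProductSpace ℝ E] {ι : Type*}

def PolarControl (T : ι → Set E) (W : Submodule ℝ E) (s : Finset ι) (β : ℝ) : Prop :=
  ∀ f ∈ W, f ∈ (innerₗ E).polar (⋂ i, T i) → ∀ y ∈ ⋂ i ∈ s, T i, |⟪y, f⟫| ≤ β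

lemma PolarControl.mono {T : ι → Set E} {W : Submodule ℝ E} {s : Finset ι} {β β' : ℝ}
    (h : PolarControl T W s β) (hβ : β ≤ β') : PolarControl T W s β' :=
  fun f hf hfK y hy => (h f hf hfK y hy).trans hβ

lemma polarControl_bot (T : ι → Set E) : PolarControl T ⊥ ∅ 0 := by
  intro f hf _ y _
  rw [(Submodule.mem_bot ℝ).1 hf, inner_zero_right, abs_zero]

variable [FiniteDimensional ℝ E] [Finite ι] [Nonempty ι]

lemma exists_mem_innerPolar_forall_norm_starProjection_le {T : ι → Set E}
    (hT : ∀ i, AbsConvex ℝ (T i)) (hcl : ∀ i, IsClosed (T i)) (hnhds : ∀ i, T i ∈ 𝓝 0)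
    (W : Submodule ℝ E) :
    ∃ i, ∃ p ∈ (innerₗ E).polar (T i), ∀ f ∈ (innerₗ E).polar (⋂ i, T i),
      ‖Wᗮ.starProjection f‖ ≤ ‖Wᗮ.starProjection p‖ := by
  have hcompact : IsCompact (⋃ i, (innerₗ E).polar (T i)) := isCompact_iUnion fun i =>
    isCompact_of_isClosed_isBounded (isClosed_innerPolar _)
      (isBounded_innerPolar_of_mem_nhds_zero (hnhds i))
  obtain ⟨p, hpU, hmax⟩ := hcompact.exists_isMaxOn
    ⟨0, mem_iUnion.2 ⟨Classical.arbitrary ι, LinearMap.zero_mem_polar _ _⟩⟩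
    Wᗮ.starProjection.continuous.norm.continuousOn
  obtain ⟨i, hp⟩ := mem_iUnion.1 hpU
  refine ⟨i, p, hp, fun f hf => ?_⟩
  have hsub : closedAbsConvexHull ℝ (⋃ i, (innerₗ E).polar (T i)) ⊆
      Wᗮ.starProjection ⁻¹' closedBall 0 ‖Wᗮ.starProjection p‖ :=
    closedAbsConvexHull_min (fun q hq => mem_closedBall_zero_iff.2 (hmax hq))
      (AbsConvex.linear_preimage ⟨balanced_closedBall_zero, convex_closedBall _ _⟩
        (Wᗮ.starProjection : E →ₗ[ℝ] E))
      (isClosed_closedBall.preimage Wᗮ.starProjection.continuous)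
  exact mem_closedBall_zero_iff.1 <| hsub <| innerPolar_iInter_subset_closedAbsConvexHull hT hcl
    (fun i => mem_of_mem_nhds (hnhds i)) hf

/- For `f = w + c • p` in the polar of `⋂ i, T i`, the choice of `p` forces `|c| ≤ 1`, so
`w / 2` is again in that polar. -/
lemma PolarControl.exists_insert [DecidableEq ι] {T : ι → Set E}
    (hT : ∀ i, AbsConvex ℝ (T i)) (hcl : ∀ i, IsClosed (T i)) (hnhds : ∀ i, T i ∈ 𝓝 0)
    {W : Submodule ℝ E} {s : Finset ι} {β : ℝ} (hW : PolarControl T W s β)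
    (hK : ¬ (innerₗ E).polar (⋂ i, T i) ⊆ W) :
    ∃ i p, p ∉ W ∧ PolarControl T (W ⊔ Submodule.span ℝ {p}) (insert i s) (2 * β + 1) := by
  obtain ⟨i, p, hp, hmax⟩ := exists_mem_innerPolar_forall_norm_starProjection_le hT hcl hnhds W
  have hpW : p ∉ W := fun hpW => hK fun f hf => by
    have := hmax f hf
    rwa [(starProjection_orthogonal_eq_zero_iff W).2 hpW, norm_zero, norm_le_zero_iff,
      starProjection_orthogonal_eq_zero_iff] at this
  have hpK : p ∈ (innerₗ E).polar (⋂ i, T i) := (innerₗ E).polar_antitone (iInter_subset T i) hp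
  refine ⟨i, p, hpW, ?_⟩
  intro f hf hfK y hy
  rw [Finset.set_biInter_insert] at hy
  obtain ⟨w, hw, q, hq, rfl⟩ := Submodule.mem_sup.1 hf
  obtain ⟨c, rfl⟩ := Submodule.mem_span_singleton.1 hq
  have hc : |c| ≤ 1 := by
    have hpos : 0 < ‖Wᗮ.starProjection p‖ :=
      norm_pos_iff.2 fun h => hpW ((starProjection_orthogonal_eq_zero_iff W).1 h)
    have := hmax _ hfK
    rw [map_add, (starProjection_orthogonal_eq_zero_iff W).2 hw, zero_add, map_smul, norm_smul,
      Real.norm_eq_abs] at this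
    exact (mul_le_iff_le_one_left hpos).1 this
  have hcp {a : E} (h : |⟪a, p⟫| ≤ 1) : |c * ⟪a, p⟫| ≤ 1 := by
    rw [abs_mul]
    exact mul_le_one₀ hc (abs_nonneg _) h
  have hw2 : (2 : ℝ)⁻¹ • w ∈ (innerₗ E).polar (⋂ i, T i) := mem_innerPolar_iff.2 fun a ha => by
    have h1 := mem_innerPolar_iff.1 hfK a ha
    have h2 := hcp (mem_innerPolar_iff.1 hpK a ha)
    rw [inner_add_right, inner_smul_right] at h1
    rw [inner_smul_right, abs_mul, abs_inv, abs_two, inv_mul_le_iff₀ two_pos]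
    rw [abs_le] at h1 h2 ⊢
    constructor <;> linarith
  have hwy := hW _ (W.smul_mem _ hw) hw2 y hy.2
  have hpy := hcp (mem_innerPolar_iff.1 hp y hy.1)
  rw [inner_smul_right, abs_mul, abs_inv, abs_two, inv_mul_le_iff₀ two_pos] at hwy
  rw [inner_add_right, inner_smul_right]
  exact (abs_add_le _ _).trans (by linarith)

lemma exists_polarControl {T : ι → Set E}
    (hT : ∀ i, AbsConvex ℝ (T i)) (hcl : ∀ i, IsClosed (T i)) (hnhds : ∀ i, T i ∈ 𝓝 0) (j : ℕ) :
    ∃ (W : Submodule ℝ E) (s : Finset ι), ((innerₗ E).polar (⋂ i, T i) ⊆ W ∨ j ≤ finrank ℝ W) ∧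
      s.card ≤ j ∧ PolarControl T W s (2 ^ j - 1) := by
  classical
  induction j with
  | zero => exact ⟨⊥, ∅, Or.inr (Nat.zero_le _), le_rfl, by simpa using polarControl_bot T⟩
  | succ j ih =>
    obtain ⟨W, s, hWK, hs, hW⟩ := ih
    by_cases hK : (innerₗ E).polar (⋂ i, T i) ⊆ W
    · have hβ : (2 : ℝ) ^ j - 1 ≤ 2 ^ (j + 1) - 1 := by gcongr <;> norm_num
      exact ⟨W, s, Or.inl hK, hs.trans j.le_succ, hW.mono hβ⟩
    have hj : j ≤ finrank ℝ W := hWK.resolve_left hK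
    obtain ⟨i, p, hpW, hW'⟩ := hW.exists_insert hT hcl hnhds hK
    have hlt : W < W ⊔ Submodule.span ℝ {p} :=
      left_lt_sup.2 fun h => hpW ((Submodule.span_singleton_le_iff_mem p W).1 h)
    have hrank := Submodule.finrank_lt_finrank_of_lt hlt
    refine ⟨W ⊔ Submodule.span ℝ {p}, insert i s, Or.inr (by omega),
      (Finset.card_insert_le i s).trans (by omega), ?_⟩
    convert hW' using 1
    ring

theorem exists_finset_biInter_subset_smul_iInter_of_isClosed {T : ι → Set E}
    (hT : ∀ i, AbsConvex ℝ (T i)) (hcl : ∀ i, IsClosed (T i)) (hnhds : ∀ i, T i ∈ 𝓝 0) :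
    ∃ s : Finset ι, s.card ≤ finrank ℝ E ∧
      ⋂ i ∈ s, T i ⊆ (2 : ℝ) ^ finrank ℝ E • ⋂ i, T i := by
  obtain ⟨W, s, hWK, hs, hW⟩ := exists_polarControl hT hcl hnhds (finrank ℝ E)
  have hK : (innerₗ E).polar (⋂ i, T i) ⊆ W := hWK.elim id fun h => by
    rw [Submodule.eq_top_of_finrank_eq (h.antisymm' (Submodule.finrank_le W))]
    exact subset_univ _
  refine ⟨s, hs, fun y hy => (mem_smul_set_iff_inv_smul_mem₀ (by positivity) _ _).2 ?_⟩
  refine innerPolar_innerPolar_subset (AbsConvex.iInter hT) (isClosed_iInter hcl)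
    (mem_iInter.2 fun i => mem_of_mem_nhds (hnhds i)) (mem_innerPolar_iff.2 fun f hf => ?_)
  have hfy := hW f (hK hf) hf y hy
  rw [inner_smul_right, abs_mul, abs_inv, abs_pow, abs_two, real_inner_comm,
    inv_mul_le_iff₀ (by positivity)]
  linarith

theorem exists_finset_biInter_subset_smul_iInter_of_mem_nhds {T : ι → Set E}
    (hT : ∀ i, AbsConvex ℝ (T i)) (hnhds : ∀ i, T i ∈ 𝓝 0) :
    ∃ s : Finset ι, s.card ≤ finrank ℝ E ∧
      ⋂ i ∈ s, T i ⊆ (2 : ℝ) ^ (finrank ℝ E + 1) • ⋂ i, T i := by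
  obtain ⟨s, hs, hsub⟩ := exists_finset_biInter_subset_smul_iInter_of_isClosed
    (fun i => (hT i).closure) (fun i => isClosed_closure)
    (fun i => Filter.mem_of_superset (hnhds i) subset_closure)
  refine ⟨s, hs, fun y hy => ?_⟩
  obtain ⟨z, hz, rfl⟩ := hsub (biInter_mono subset_rfl (fun i _ => subset_closure) hy)
  have hz2 : z ∈ (2 : ℝ) • ⋂ i, T i := by
    rw [mem_smul_set_iff_inv_smul_mem₀ two_ne_zero]
    exact mem_iInter.2 fun i => (mem_smul_set_iff_inv_smul_mem₀ two_ne_zero _ _).1 <|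
      (hT i).2.closure_subset_smul_of_mem_nhds_zero (hnhds i) one_lt_two (mem_iInter.1 hz i)
  rw [pow_succ, mul_smul]
  exact smul_mem_smul_set hz2

end Selection

theorem exists_finset_biInter_subset_smul_iInter_of_finrank_le {ι : Type*} [Finite ι]
    [Nonempty ι] (d : ℕ) :
    ∀ (E : Type*) [NormedAddCommGroup E] [InnerProductSpace ℝ E] [FiniteDimensional ℝ E]
      (T : ι → Set E), finrank ℝ E ≤ d → (∀ i, AbsConvex ℝ (T i)) → (∀ i, (0 : E) ∈ T i) →
      ∃ s : Finset ι, s.card ≤ d ∧ ⋂ i ∈ s, T i ⊆ (2 : ℝ) ^ (d + 1) • ⋂ i, T i := by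
  refine Nat.strong_induction_on d fun d ih => ?_
  intro E _ _ _ T hd hT h0
  have hmono {m : ℕ} (hm : m ≤ d) :
      (2 : ℝ) ^ (m + 1) • ⋂ i, T i ⊆ (2 : ℝ) ^ (d + 1) • ⋂ i, T i :=
    (AbsConvex.iInter hT).1.smul_mono (by simp only [norm_pow, Real.norm_ofNat]; gcongr; norm_num)
  by_cases hspan : ∀ i, Submodule.span ℝ (T i) = ⊤
  · obtain ⟨s, hs, hsub⟩ := exists_finset_biInter_subset_smul_iInter_of_mem_nhds hT
      fun i => (hT i).mem_nhds_zero_of_span_eq_top (h0 i) (hspan i)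
    exact ⟨s, hs.trans hd, hsub.trans (hmono hd)⟩
  obtain ⟨i₀, hi₀⟩ := not_forall.1 hspan
  classical
  set V := Submodule.span ℝ (T i₀)
  have hV : finrank ℝ V < d := (Submodule.finrank_lt hi₀).trans_le hd
  obtain ⟨s, hs, hsub⟩ := ih _ hV V (fun i => V.subtype ⁻¹' T i) le_rfl
    (fun i => (hT i).linear_preimage V.subtype) (fun i => by simpa using h0 i)
  refine ⟨insert i₀ s, (Finset.card_insert_le _ _).trans (by omega), fun y hy => ?_⟩
  rw [Finset.set_biInter_insert] at hy
  have hyV : (⟨y, Submodule.subset_span hy.1⟩ : V) ∈ ⋂ i ∈ s, V.subtype ⁻¹' T i := by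
    simpa using hy.2
  obtain ⟨z, hz, hzy⟩ := hsub hyV
  refine hmono hV.le ⟨z, by simpa using hz, ?_⟩
  simpa using congrArg Subtype.val hzy

theorem exists_finset_biInter_subset_smul_iInter {V : Type*} [AddCommGroup V] [Module ℝ V]
    [FiniteDimensional ℝ V] {ι : Type*} [Finite ι] [Nonempty ι] {T : ι → Set V}
    (hT : ∀ i, AbsConvex ℝ (T i)) (h0 : ∀ i, (0 : V) ∈ T i) :
    ∃ s : Finset ι, s.card ≤ finrank ℝ V ∧
      ⋂ i ∈ s, T i ⊆ (2 : ℝ) ^ (finrank ℝ V + 1) • ⋂ i, T i := by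
  let e : V ≃ₗ[ℝ] EuclideanSpace ℝ (Fin (finrank ℝ V)) := LinearEquiv.ofFinrankEq _ _ (by simp)
  obtain ⟨s, hs, hsub⟩ := exists_finset_biInter_subset_smul_iInter_of_finrank_le (finrank ℝ V) _
    (fun i => e.symm ⁻¹' T i) (by simp) (fun i => (hT i).linear_preimage e.symm.toLinearMap)
    (fun i => by simpa using h0 i)
  refine ⟨s, hs, fun y hy => ?_⟩
  obtain ⟨z, hz, hzy⟩ := hsub (show e y ∈ ⋂ i ∈ s, e.symm ⁻¹' T i by simpa using hy)
  refine ⟨e.symm z, by simpa using hz, ?_⟩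
  simp only [← map_smul, hzy, e.symm_apply_apply]

lemma pd_add (i : Fin 2) {F H : E2 → ℝ} (hF : Differentiable ℝ F) (hH : Differentiable ℝ H) :
    pd i (F + H) = pd i F + pd i H := by
  ext x
  simp [pd, fderiv_add (hF x) (hH x)]

lemma pd_smul (i : Fin 2) (c : ℝ) (F : E2 → ℝ) : pd i (c • F) = c • pd i F := by
  ext x
  simp [pd, fderiv_const_smul_field]

lemma contDiff_pd {n : ℕ} {F : E2 → ℝ} (hF : ContDiff ℝ (n + 1) F) (i : Fin 2) :
    ContDiff ℝ n (pd i F) :=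
  (hF.fderiv_right le_rfl).clm_apply contDiff_const

lemma contDiff_iterate_pd {n m : ℕ} {F : E2 → ℝ} (hF : ContDiff ℝ (n + m) F) (i : Fin 2) :
    ContDiff ℝ n ((pd i)^[m] F) := by
  induction m generalizing F with
  | zero => simpa using hF
  | succ m ih =>
    rw [Function.iterate_succ_apply]
    exact ih (contDiff_pd (hF.of_le (by push_cast; rfl)) i)

lemma iterate_pd_add (i : Fin 2) {m : ℕ} {F H : E2 → ℝ} (hF : ContDiff ℝ m F)
    (hH : ContDiff ℝ m H) : (pd i)^[m] (F + H) = (pd i)^[m] F + (pd i)^[m] H := by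
  induction m generalizing F H with
  | zero => rfl
  | succ m ih =>
    simp only [Function.iterate_succ_apply]
    rw [pd_add i (hF.differentiable (by simp)) (hH.differentiable (by simp))]
    exact ih (contDiff_pd hF i) (contDiff_pd hH i)

lemma iterate_pd_smul (i : Fin 2) (m : ℕ) (c : ℝ) (F : E2 → ℝ) :
    (pd i)^[m] (c • F) = c • (pd i)^[m] F :=
  (Function.Commute.iterate_left (fun F => pd_smul i c F) m) F

lemma Dmul_add {α : ℕ × ℕ} {F H : E2 → ℝ} (hF : ContDiff ℝ (α.1 + α.2 : ℕ) F)
    (hH : ContDiff ℝ (α.1 + α.2 : ℕ) H) : Dmul α (F + H) = Dmul α F + Dmul α H := by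
  rw [Dmul, iterate_pd_add 1 (hF.of_le (by simp)) (hH.of_le (by simp)),
    iterate_pd_add 0 (contDiff_iterate_pd hF 1) (contDiff_iterate_pd hH 1), Dmul, Dmul]

lemma Dmul_smul (α : ℕ × ℕ) (c : ℝ) (F : E2 → ℝ) : Dmul α (c • F) = c • Dmul α F := by
  rw [Dmul, iterate_pd_smul, iterate_pd_smul, Dmul]

def twoJet (F : E2 → ℝ) (x : E2) : EuclideanSpace ℝ multiIdx2 :=
  WithLp.toLp 2 fun α => Dmul α F x

lemma C2sum_eq_norm_twoJet (F : E2 → ℝ) (x : E2) : C2sum F x = ‖twoJet F x‖ := by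
  rw [EuclideanSpace.norm_eq, C2sum, ← Finset.sum_coe_sort multiIdx2]
  simp [twoJet]

lemma twoJet_add {F H : E2 → ℝ} (hF : ContDiff ℝ 2 F) (hH : ContDiff ℝ 2 H) (x : E2) :
    twoJet (F + H) x = twoJet F x + twoJet H x := by
  ext α
  have hα : ((α.1.1 + α.1.2 : ℕ) : WithTop ℕ∞) ≤ 2 := by
    have := (Finset.mem_filter.1 α.2).2
    exact_mod_cast this
  simp [twoJet, Dmul_add (hF.of_le hα) (hH.of_le hα)]

lemma twoJet_smul (c : ℝ) (F : E2 → ℝ) (x : E2) : twoJet (c • F) x = c • twoJet F x := by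
  ext α
  simp [twoJet, Dmul_smul]

lemma C2NormLE.add {F H : E2 → ℝ} {M N : ℝ} (hF : ContDiff ℝ 2 F) (hH : ContDiff ℝ 2 H)
    (hFM : C2NormLE F M) (hHN : C2NormLE H N) : C2NormLE (F + H) (M + N) := fun x => by
  have hFx := hFM x
  have hHx := hHN x
  rw [C2sum_eq_norm_twoJet] at hFx hHx ⊢
  rw [twoJet_add hF hH]
  exact (norm_add_le _ _).trans (add_le_add hFx hHx)

lemma C2NormLE.smul {F : E2 → ℝ} {M : ℝ} (hF : C2NormLE F M) (c : ℝ) :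
    C2NormLE (c • F) (|c| * M) := fun x => by
  have hFx := hF x
  rw [C2sum_eq_norm_twoJet] at hFx ⊢
  rw [twoJet_smul, norm_smul, Real.norm_eq_abs]
  exact mul_le_mul_of_nonneg_left hFx (abs_nonneg c)

lemma C2NormLE.mono {F : E2 → ℝ} {M N : ℝ} (hF : C2NormLE F M) (h : M ≤ N) : C2NormLE F N :=
  fun x => (hF x).trans h

def sigmaCoords (x : E2) (S : Set E2) : Set (ℝ × (E2 →L[ℝ] ℝ)) :=
  { v | ∃ φ : E2 → ℝ, ContDiff ℝ 2 φ ∧ (∀ z ∈ S, φ z = 0) ∧ C2NormLE φ 1 ∧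
      v = (φ x, fderiv ℝ φ x) }

def jetOfCoords (x : E2) : ℝ × (E2 →L[ℝ] ℝ) →ₗ[ℝ] E2 → ℝ where
  toFun v y := v.1 + v.2 (y - x)
  map_add' v w := by ext y; simp [add_add_add_comm]
  map_smul' c v := by ext y; simp [mul_add]

lemma jetOfCoords_injective (x : E2) : Function.Injective (jetOfCoords x) := by
  intro v w h
  have hx := congrFun h x
  simp only [jetOfCoords, LinearMap.coe_mk, AddHom.coe_mk, sub_self, map_zero, add_zero] at hx
  refine Prod.ext hx (ContinuousLinearMap.ext fun u => ?_)
  have := congrFun h (u + x)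
  simpa [jetOfCoords, hx] using this

lemma sigmaSet_eq_image_sigmaCoords (x : E2) (S : Set E2) :
    sigmaSet x S = jetOfCoords x '' sigmaCoords x S := by
  ext P
  constructor
  · rintro ⟨φ, hφ, hS, hC, rfl⟩
    exact ⟨_, ⟨φ, hφ, hS, hC, rfl⟩, rfl⟩
  · rintro ⟨_, ⟨φ, hφ, hS, hC, rfl⟩, rfl⟩
    exact ⟨φ, hφ, hS, hC, rfl⟩

lemma zero_mem_sigmaCoords (x : E2) (S : Set E2) : (0 : ℝ × (E2 →L[ℝ] ℝ)) ∈ sigmaCoords x S :=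
  ⟨0, contDiff_const, fun _ _ => rfl, fun y => by
    rw [C2sum_eq_norm_twoJet, ← zero_smul ℝ (0 : E2 → ℝ), twoJet_smul, zero_smul, norm_zero]
    exact zero_le_one, by ext <;> simp⟩

lemma absConvex_sigmaCoords (x : E2) (S : Set E2) : AbsConvex ℝ (sigmaCoords x S) := by
  refine ⟨balanced_iff_smul_mem.2 fun c hc => ?_, ?_⟩
  · rintro _ ⟨φ, hφ, hS, hC, rfl⟩
    refine ⟨c • φ, hφ.const_smul c, fun z hz => by simp [hS z hz],
      (hC.smul c).mono (by simpa using hc), ?_⟩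
    simp [fderiv_const_smul_field]
  · rintro _ ⟨φ, hφ, hS, hC, rfl⟩ _ ⟨ψ, hψ, hS', hC', rfl⟩ a b ha hb hab
    have hφ1 := hφ.differentiable (by simp)
    have hψ1 := hψ.differentiable (by simp)
    refine ⟨a • φ + b • ψ, (hφ.const_smul a).add (hψ.const_smul b),
      fun z hz => by simp [hS z hz, hS' z hz],
      ((hC.smul a).add (hφ.const_smul a) (hψ.const_smul b) (hC'.smul b)).mono (by
        rw [abs_of_nonneg ha, abs_of_nonneg hb]; linarith), ?_⟩
    simp [fderiv_add ((hφ1 x).const_smul a) ((hψ1 x).const_smul b), fderiv_const_smul_field]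

lemma finrank_real_prod_clm_E2 : finrank ℝ (ℝ × (E2 →L[ℝ] ℝ)) = 3 := by
  rw [Module.finrank_prod, ← LinearMap.toContinuousLinearMap.finrank_eq, Module.finrank_linearMap]
  simp

lemma Finset.exists_fin_range_superset {ι : Type*} [Nonempty ι] (s : Finset ι) {n : ℕ}
    (hs : s.card ≤ n) : ∃ e : Fin n → ι, ↑s ⊆ Set.range e := by
  refine ⟨fun ν => s.toList.getD ν (Classical.arbitrary ι), fun i hi => ?_⟩
  obtain ⟨m, hm, rfl⟩ := List.getElem_of_mem (Finset.mem_toList.2 hi)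
  exact ⟨⟨m, hm.trans_le (by simpa using hs)⟩, List.getD_eq_getElem _ _ hm⟩

/-- (Lemma 4.5 of [JL20].) Twelve sets `S₁, …, S₁₂ ⊆ E` of cardinality
at most `k` suffice: `∩ν σ(x, Sν) ⊆ C·σ^♯(x, k)`. -/
theorem sigma_sharp_local :
    ∃ C : ℝ, 0 < C ∧
      ∀ E : Set E2, E.Finite →
        ∀ (x : E2) (k : ℕ),
          ∃ S : Fin 12 → Set E2,
            (∀ ν, S ν ⊆ E ∧ (S ν).ncard ≤ k) ∧
            (⋂ ν, sigmaSet x (S ν)) ⊆ C • sigmaSharp E x k := by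
  refine ⟨2 ^ (finrank ℝ (ℝ × (E2 →L[ℝ] ℝ)) + 1), by positivity, fun E hE x k => ?_⟩
  let I := {S : Set E2 // S ⊆ E ∧ S.ncard ≤ k}
  have : Finite I := (hE.finite_subsets.subset fun S hS => hS.1).to_subtype
  have : Nonempty I := ⟨⟨∅, empty_subset E, by simp⟩⟩
  obtain ⟨s, hs, hsub⟩ := exists_finset_biInter_subset_smul_iInter
    (T := fun S : I => sigmaCoords x S) (fun S => absConvex_sigmaCoords x S)
    (fun S => zero_mem_sigmaCoords x S)
  have hs12 : s.card ≤ 12 := by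
    rw [finrank_real_prod_clm_E2] at hs
    omega
  obtain ⟨e, he⟩ := s.exists_fin_range_superset hs12
  refine ⟨fun ν => (e ν).1, fun ν => (e ν).2, ?_⟩
  have hsharp : sigmaSharp E x k = ⋂ S : I, sigmaSet x S := by
    ext P
    simp [sigmaSharp, I]
  have hcover : ⋂ ν, sigmaCoords x (e ν) ⊆ ⋂ S ∈ s, sigmaCoords x S :=
    subset_iInter₂ fun S hS => by
      obtain ⟨ν, rfl⟩ := he hS
      exact iInter_subset _ ν
  simp only [hsharp, sigmaSet_eq_image_sigmaCoords]
  rw [← (jetOfCoords_injective x).injOn.image_iInter_eq,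
    ← (jetOfCoords_injective x).injOn.image_iInter_eq, ← image_smul_set]
  exact image_mono (hcover.trans hsub)

end
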